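/- arXiv:1910.04900 — 2 statements merged into one kernel-verified Lean document; each statement's English description precedes it below -/
import Mathlib

section
/- Let (P_i)_{i≥1} be [0,1]-valued p-values on a probability space and H0 ⊆ ℕ the index set of true nulls. Assume each null p-value P_i (i ∈ H0) is uniformly conservative and is independent of the σ-algebra G_{i−1} = σ(P_1,…,P_{i−1}). Fix α ∈ (0,1) and for each i let α_i, λ_i, τ_i : Ω → (0,1) be G_{i−1}-measurable with λ_i < τ_i and α_i < τ_i almost surely, and assume that almost surely Σ_{i : λ_i < P_i ≤ τ_i} α_i/(τ_i−λ_i) ≤ α. Then the expected number of false discoveries satisfies E[ #{ i ∈ H0 : P_i ≤ α_i } ] ≤ α; in particular ℙ(∃ i ∈ H0 with P_i ≤ α_i) ≤ α. -/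
/-!
Fix a null index `i` and freeze the past, so that the levels `a = α_i`, `l = λ_i`, `τ = τ_i` are
constants. Uniform conservativeness gives `ℙ(P ≤ a) ≤ (a/τ) ℙ(P ≤ τ)` and
`ℙ(P ≤ l) ≤ (l/τ) ℙ(P ≤ τ)`, hence `ℙ(P ≤ a) ≤ a/(τ - l) · ℙ(l < P ≤ τ)`. Since `P_i` is
independent of the past, integrating over the past yields
`ℙ(P_i ≤ α_i) ≤ 𝔼[α_i/(τ_i - λ_i) · 1{λ_i < P_i ≤ τ_i}]`. Summing over the nulls and using the
almost sure budget constraint bounds the expected number of false rejections by `α`; the bound on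
the FWER is then the union bound.
-/

open MeasureTheory ProbabilityTheory
open scoped ENNReal

/-- The σ-algebra generated by the first `i` p-values `P 0, …, P (i-1)`. -/
def pastFiltration {Ω : Type*} [MeasurableSpace Ω] (P : ℕ → Ω → ℝ) (i : ℕ) :
    MeasurableSpace Ω :=
  ⨆ j ∈ Finset.range i, MeasurableSpace.comap (P j) inferInstance

open Set

section

variable {Ω β γ : Type*} {mΩ : MeasurableSpace Ω} {μ : Measure Ω}

lemma pastFiltration_le {P : ℕ → Ω → ℝ} (hP : ∀ i, Measurable (P i)) (i : ℕ) :
    pastFiltration P i ≤ mΩ :=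
  iSup₂_le fun j _ => (hP j).comap_le

theorem ProbabilityTheory.IndepFun.lintegral_comp_eq_lintegral_lintegral [MeasurableSpace β]
    [MeasurableSpace γ] [IsFiniteMeasure μ] {X : Ω → β} {Y : Ω → γ} (hXY : IndepFun X Y μ)
    (hX : Measurable X) (hY : Measurable Y) {f : β → γ → ℝ≥0∞}
    (hf : Measurable (Function.uncurry f)) :
    ∫⁻ ω, f (X ω) (Y ω) ∂μ = ∫⁻ ω, ∫⁻ ω', f (X ω') (Y ω) ∂μ ∂μ := by
  calc ∫⁻ ω, f (X ω) (Y ω) ∂μ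
      = ∫⁻ q, Function.uncurry f q ∂μ.map fun ω => (X ω, Y ω) :=
        (lintegral_map hf (hX.prodMk hY)).symm
    _ = ∫⁻ y, ∫⁻ x, f x y ∂μ.map X ∂μ.map Y := by
        rw [(indepFun_iff_map_prod_eq_prod_map_map hX.aemeasurable hY.aemeasurable).1 hXY,
          lintegral_prod_symm' _ hf]
        rfl
    _ = ∫⁻ ω, ∫⁻ ω', f (X ω') (Y ω) ∂μ ∂μ := by
        rw [lintegral_map hf.lintegral_prod_left hY]
        refine lintegral_congr fun ω => lintegral_map ?_ hX
        exact hf.comp (measurable_id.prodMk measurable_const)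

def IsUniformlyConservative (μ : Measure Ω) (p : Ω → ℝ) : Prop :=
  ∀ x ∈ Icc (0 : ℝ) 1, ∀ τ ∈ Icc (0 : ℝ) 1,
    μ {ω | p ω ≤ x * τ} ≤ ENNReal.ofReal x * μ {ω | p ω ≤ τ}

theorem IsUniformlyConservative.measure_le_le_mul_measure_Ioc [IsFiniteMeasure μ]
    {p : Ω → ℝ} (hp : IsUniformlyConservative μ p) {a l τ : ℝ} (ha : 0 ≤ a) (hl : 0 ≤ l)
    (hlτ : l < τ) (haτ : a ≤ τ) (hτ : τ ≤ 1) :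
    μ {ω | p ω ≤ a} ≤ ENNReal.ofReal (a / (τ - l)) * μ (p ⁻¹' Ioc l τ) := by
  have hτ0 : 0 < τ := hl.trans_lt hlτ
  have hrescale : ∀ c, 0 ≤ c → c ≤ τ →
      μ {ω | p ω ≤ c} ≤ ENNReal.ofReal (c / τ) * μ {ω | p ω ≤ τ} := fun c hc hcτ => by
    simpa [div_mul_cancel₀ c hτ0.ne'] using
      hp (c / τ) ⟨div_nonneg hc hτ0.le, (div_le_one hτ0).2 hcτ⟩ τ ⟨hτ0.le, hτ⟩
  have hsplit : μ {ω | p ω ≤ τ} ≤ μ (p ⁻¹' Ioc l τ) + μ {ω | p ω ≤ l} :=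
    (measure_mono fun ω (h : p ω ≤ τ) => (lt_or_ge l (p ω)).imp (⟨·, h⟩) id).trans
      (measure_union_le _ _)
  have hweights : ENNReal.ofReal ((τ - l) / τ) + ENNReal.ofReal (l / τ) = 1 := by
    rw [← ENNReal.ofReal_add (div_nonneg (by linarith) hτ0.le) (div_nonneg hl hτ0.le),
      ← add_div, sub_add_cancel, div_self hτ0.ne', ENNReal.ofReal_one]
  have hmass : ENNReal.ofReal ((τ - l) / τ) * μ {ω | p ω ≤ τ} ≤ μ (p ⁻¹' Ioc l τ) := by
    refine ENNReal.le_of_add_le_add_right (measure_ne_top μ {ω | p ω ≤ l}) ?_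
    calc ENNReal.ofReal ((τ - l) / τ) * μ {ω | p ω ≤ τ} + μ {ω | p ω ≤ l}
        ≤ ENNReal.ofReal ((τ - l) / τ) * μ {ω | p ω ≤ τ}
            + ENNReal.ofReal (l / τ) * μ {ω | p ω ≤ τ} := by
          gcongr; exact hrescale l hl hlτ.le
      _ = μ {ω | p ω ≤ τ} := by rw [← add_mul, hweights, one_mul]
      _ ≤ μ (p ⁻¹' Ioc l τ) + μ {ω | p ω ≤ l} := hsplit
  calc μ {ω | p ω ≤ a} ≤ ENNReal.ofReal (a / τ) * μ {ω | p ω ≤ τ} := hrescale a ha haτ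
    _ = ENNReal.ofReal (a / (τ - l)) * (ENNReal.ofReal ((τ - l) / τ) * μ {ω | p ω ≤ τ}) := by
        rw [← mul_assoc, ← ENNReal.ofReal_mul (div_nonneg ha (by linarith)),
          div_mul_div_cancel₀ (by linarith)]
    _ ≤ ENNReal.ofReal (a / (τ - l)) * μ (p ⁻¹' Ioc l τ) := by gcongr

/-- The wealth `α_i / (τ_i - λ_i) · 1{λ_i < P_i ≤ τ_i}` that ADDIS-Spending spends on a test. -/
noncomputable def addisCost (a l τ p : ℝ) : ℝ≥0∞ :=
  ENNReal.ofReal (if l < p ∧ p ≤ τ then a / (τ - l) else 0)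

lemma addisCost_eq_indicator (a l τ p : ℝ) :
    addisCost a l τ p = (Ioc l τ).indicator (fun _ => ENNReal.ofReal (a / (τ - l))) p := by
  by_cases h : l < p ∧ p ≤ τ <;> simp [addisCost, indicator, h]

@[fun_prop]
lemma Measurable.addisCost {a l τ p : β → ℝ} [MeasurableSpace β] (ha : Measurable a)
    (hl : Measurable l) (hτ : Measurable τ) (hp : Measurable p) :
    Measurable fun x => addisCost (a x) (l x) (τ x) (p x) :=
  (Measurable.ite ((measurableSet_lt hl hp).inter (measurableSet_le hp hτ))
    (ha.div (hτ.sub hl)) measurable_const).ennreal_ofReal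

theorem measure_le_le_lintegral_addisCost [IsFiniteMeasure μ] {p a l τ : Ω → ℝ}
    (hind : IndepFun p (fun ω => (a ω, l ω, τ ω)) μ) (hp : Measurable p) (ha : Measurable a)
    (hl : Measurable l) (hτ : Measurable τ) (hcons : IsUniformlyConservative μ p)
    (ha0 : ∀ ω, 0 ≤ a ω) (hl0 : ∀ ω, 0 ≤ l ω) (hτ1 : ∀ ω, τ ω ≤ 1)
    (hlτ : ∀ᵐ ω ∂μ, l ω < τ ω) (haτ : ∀ᵐ ω ∂μ, a ω ≤ τ ω) :
    μ {ω | p ω ≤ a ω} ≤ ∫⁻ ω, addisCost (a ω) (l ω) (τ ω) (p ω) ∂μ := by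
  have hY : Measurable fun ω => (a ω, l ω, τ ω) := ha.prodMk (hl.prodMk hτ)
  calc μ {ω | p ω ≤ a ω}
      = ∫⁻ ω, (Iic (a ω)).indicator (fun _ => 1) (p ω) ∂μ := by
        rw [← lintegral_indicator_one (measurableSet_le hp ha)]
        rfl
    _ = ∫⁻ ω, μ {ω' | p ω' ≤ a ω} ∂μ := by
        rw [hind.lintegral_comp_eq_lintegral_lintegral hp hY
          (f := fun t y => (Iic y.1).indicator (fun _ => 1) t)]
        · simp_rw [lintegral_indicator_const_comp hp measurableSet_Iic, one_mul]
          rfl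
        · exact measurable_const.indicator (measurableSet_le measurable_fst measurable_snd.fst)
    _ ≤ ∫⁻ ω, ENNReal.ofReal (a ω / (τ ω - l ω)) * μ (p ⁻¹' Ioc (l ω) (τ ω)) ∂μ := by
        refine lintegral_mono_ae ?_
        filter_upwards [hlτ, haτ] with ω hlτω haτω
        exact hcons.measure_le_le_mul_measure_Ioc (ha0 ω) (hl0 ω) hlτω haτω (hτ1 ω)
    _ = ∫⁻ ω, addisCost (a ω) (l ω) (τ ω) (p ω) ∂μ := by
        rw [hind.lintegral_comp_eq_lintegral_lintegral hp hY
          (f := fun t y => addisCost y.1 y.2.1 y.2.2 t)]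
        · simp_rw [addisCost_eq_indicator, lintegral_indicator_const_comp hp measurableSet_Ioc]
        · fun_prop

end

theorem addis_spending_pfer_control_general
    {Ω : Type*} [MeasurableSpace Ω] (μ : Measure Ω) [IsProbabilityMeasure μ]
    (P : ℕ → Ω → ℝ) (hPmeas : ∀ i, Measurable (P i))
    (H0 : Set ℕ)
    (hconserv : ∀ i ∈ H0, ∀ x ∈ Set.Icc (0 : ℝ) 1, ∀ τ ∈ Set.Icc (0 : ℝ) 1,
      μ {ω | P i ω ≤ x * τ} ≤ ENNReal.ofReal x * μ {ω | P i ω ≤ τ})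
    (hindep : ∀ i ∈ H0,
      Indep (MeasurableSpace.comap (P i) inferInstance) (pastFiltration P i) μ)
    (α : ℝ)
    (alev lamlev τlev : ℕ → Ω → ℝ)
    (halev_meas : ∀ i, Measurable[pastFiltration P i] (alev i))
    (hlamlev_meas : ∀ i, Measurable[pastFiltration P i] (lamlev i))
    (hτlev_meas : ∀ i, Measurable[pastFiltration P i] (τlev i))
    (halev_range : ∀ i ω, alev i ω ∈ Set.Ioo (0 : ℝ) 1)
    (hlamlev_range : ∀ i ω, lamlev i ω ∈ Set.Ioo (0 : ℝ) 1)
    (hτlev_range : ∀ i ω, τlev i ω ∈ Set.Ioo (0 : ℝ) 1)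
    (h_lam_lt : ∀ i, ∀ᵐ ω ∂μ, lamlev i ω < τlev i ω)
    (h_alev_lt : ∀ i, ∀ᵐ ω ∂μ, alev i ω < τlev i ω)
    (hbudget : ∀ᵐ ω ∂μ,
      ∑' i, ENNReal.ofReal
          (if lamlev i ω < P i ω ∧ P i ω ≤ τlev i ω then
            alev i ω / (τlev i ω - lamlev i ω) else 0)
        ≤ ENNReal.ofReal α) :
    (∫⁻ ω, ∑' i : H0, Set.indicator {ω' | P i ω' ≤ alev i ω'} (fun _ => (1 : ℝ≥0∞)) ω ∂μ)
        ≤ ENNReal.ofReal α ∧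
      μ {ω | ∃ i ∈ H0, P i ω ≤ alev i ω} ≤ ENNReal.ofReal α := by
  have ha i := (halev_meas i).mono (pastFiltration_le hPmeas i) le_rfl
  have hl i := (hlamlev_meas i).mono (pastFiltration_le hPmeas i) le_rfl
  have hτ i := (hτlev_meas i).mono (pastFiltration_le hPmeas i) le_rfl
  have hrej : ∀ i ∈ H0, μ {ω | P i ω ≤ alev i ω} ≤
      ∫⁻ ω, addisCost (alev i ω) (lamlev i ω) (τlev i ω) (P i ω) ∂μ := fun i hi =>
    measure_le_le_lintegral_addisCost
      ((IndepFun_iff_Indep _ _ _).2 <| indep_of_indep_of_le_right (hindep i hi)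
        ((halev_meas i).prodMk ((hlamlev_meas i).prodMk (hτlev_meas i))).comap_le)
      (hPmeas i) (ha i) (hl i) (hτ i) (hconserv i hi) (fun ω => (halev_range i ω).1.le)
      (fun ω => (hlamlev_range i ω).1.le) (fun ω => (hτlev_range i ω).2.le) (h_lam_lt i)
      ((h_alev_lt i).mono fun _ h => h.le)
  have hcount : ∫⁻ ω, ∑' i : H0, {ω' | P i ω' ≤ alev i ω'}.indicator (fun _ => 1) ω ∂μ
      = ∑' i : H0, μ {ω | P i ω ≤ alev i ω} := by
    rw [lintegral_tsum fun i : H0 => (measurable_const.indicator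
      (measurableSet_le (hPmeas i) (ha i))).aemeasurable]
    simp_rw [lintegral_indicator_const (measurableSet_le (hPmeas _) (ha _)), one_mul]
  have hpfer : ∑' i : H0, μ {ω | P i ω ≤ alev i ω} ≤ ENNReal.ofReal α :=
    calc ∑' i : H0, μ {ω | P i ω ≤ alev i ω}
        ≤ ∑' i : H0, ∫⁻ ω, addisCost (alev i ω) (lamlev i ω) (τlev i ω) (P i ω) ∂μ :=
          ENNReal.tsum_le_tsum fun i => hrej i i.2
      _ ≤ ∑' i, ∫⁻ ω, addisCost (alev i ω) (lamlev i ω) (τlev i ω) (P i ω) ∂μ :=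
          ENNReal.tsum_comp_le_tsum_of_injective Subtype.coe_injective _
      _ = ∫⁻ ω, ∑' i, addisCost (alev i ω) (lamlev i ω) (τlev i ω) (P i ω) ∂μ :=
          (lintegral_tsum fun i => ((ha i).addisCost (hl i) (hτ i) (hPmeas i)).aemeasurable).symm
      _ ≤ ∫⁻ _, ENNReal.ofReal α ∂μ := lintegral_mono_ae hbudget
      _ = ENNReal.ofReal α := by simp
  refine ⟨hcount ▸ hpfer, ?_⟩
  calc μ {ω | ∃ i ∈ H0, P i ω ≤ alev i ω} = μ (⋃ i ∈ H0, {ω | P i ω ≤ alev i ω}) := by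
        congr 1; ext; simp
    _ ≤ ∑' i : H0, μ {ω | P i ω ≤ alev i ω} := measure_biUnion_le μ H0.to_countable _
    _ ≤ ENNReal.ofReal α := hpfer

/-- **ADDIS-Spending controls PFER (and hence FWER).** If each null p-value is uniformly
conservative and independent of the past, the levels `α_i, λ_i, τ_i` are predictable and
`(0,1)`-valued with `λ_i < τ_i` and `α_i < τ_i` a.s., and a.s.
`∑_{i : λ_i < P_i ≤ τ_i} α_i/(τ_i - λ_i) ≤ α`, then the expected number of false discoveries
is at most `α`; in particular the FWER is at most `α`. -/
theorem addis_spending_pfer_control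
    {Ω : Type*} [MeasurableSpace Ω] (μ : Measure Ω) [IsProbabilityMeasure μ]
    (P : ℕ → Ω → ℝ) (hPmeas : ∀ i, Measurable (P i))
    (hPrange : ∀ i ω, P i ω ∈ Set.Icc (0 : ℝ) 1)
    (H0 : Set ℕ)
    (hconserv : ∀ i ∈ H0, ∀ x ∈ Set.Icc (0 : ℝ) 1, ∀ τ ∈ Set.Icc (0 : ℝ) 1,
      μ {ω | P i ω ≤ x * τ} ≤ ENNReal.ofReal x * μ {ω | P i ω ≤ τ})
    (hindep : ∀ i ∈ H0,
      Indep (MeasurableSpace.comap (P i) inferInstance) (pastFiltration P i) μ)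
    (α : ℝ) (hα : α ∈ Set.Ioo (0 : ℝ) 1)
    (alev lamlev τlev : ℕ → Ω → ℝ)
    (halev_meas : ∀ i, Measurable[pastFiltration P i] (alev i))
    (hlamlev_meas : ∀ i, Measurable[pastFiltration P i] (lamlev i))
    (hτlev_meas : ∀ i, Measurable[pastFiltration P i] (τlev i))
    (halev_range : ∀ i ω, alev i ω ∈ Set.Ioo (0 : ℝ) 1)
    (hlamlev_range : ∀ i ω, lamlev i ω ∈ Set.Ioo (0 : ℝ) 1)
    (hτlev_range : ∀ i ω, τlev i ω ∈ Set.Ioo (0 : ℝ) 1)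
    (h_lam_lt : ∀ i, ∀ᵐ ω ∂μ, lamlev i ω < τlev i ω)
    (h_alev_lt : ∀ i, ∀ᵐ ω ∂μ, alev i ω < τlev i ω)
    (hbudget : ∀ᵐ ω ∂μ,
      ∑' i, ENNReal.ofReal
          (if lamlev i ω < P i ω ∧ P i ω ≤ τlev i ω then
            alev i ω / (τlev i ω - lamlev i ω) else 0)
        ≤ ENNReal.ofReal α) :
    (∫⁻ ω, ∑' i : H0, Set.indicator {ω' | P i ω' ≤ alev i ω'} (fun _ => (1 : ℝ≥0∞)) ω ∂μ)
        ≤ ENNReal.ofReal α ∧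
      μ {ω | ∃ i ∈ H0, P i ω ≤ alev i ω} ≤ ENNReal.ofReal α :=
  addis_spending_pfer_control_general μ P hPmeas H0 hconserv hindep α alev lamlev τlev halev_meas
    hlamlev_meas hτlev_meas halev_range hlamlev_range hτlev_range h_lam_lt h_alev_lt hbudget
end

section
/- For every q > 1, every constant C > 0 and every α ∈ (0,1), the series Σ_{i=1}^∞ i^{−q} · exp( −C · Φ⁻¹( α·i^{−q}/ζ(q) ) ) · log i converges (is finite). -/
open MeasureTheory ProbabilityTheory

/-- The standard normal CDF `Φ`. -/
noncomputable def stdNormalCDF (x : ℝ) : ℝ :=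
  (ProbabilityTheory.gaussianReal 0 1 (Set.Iic x)).toReal

/-- The inverse `Φ⁻¹` of the standard normal CDF (on `(0,1)`). -/
noncomputable def stdNormalQuantile : ℝ → ℝ :=
  Function.invFun stdNormalCDF

/-- The (real) Riemann zeta function `ζ(q) = ∑_{i=1}^∞ i^{-q}`. -/
noncomputable def zetaReal (q : ℝ) : ℝ :=
  ∑' i : ℕ, ((i : ℝ) + 1) ^ (-q)

/-!
Chernoff's bound `Φ(-y) ≤ exp(-y²/2)` gives `Φ⁻¹(t) ≥ -√(2 log t⁻¹)`, and Young's inequality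
turns `exp(C √(2 log t⁻¹))` into `O(t^(-ε))` for every `ε > 0`. With `t = α i^(-q) / ζ(q)` the
`i`-th term is therefore `O(i^(-(1-ε)q) log i)`, which is summable once `(1 - ε) q > 1`.
-/

open Real Set

lemma stdNormalCDF_eq_cdf : stdNormalCDF = cdf (gaussianReal 0 1) := by
  funext x
  rw [cdf_eq_real]
  rfl

lemma stdNormalCDF_sub_stdNormalCDF (a b : ℝ) :
    stdNormalCDF b - stdNormalCDF a = ∫ t in a..b, gaussianPDFReal 0 1 t := by
  have hint := integrable_gaussianPDFReal 0 1
  simp only [stdNormalCDF, gaussianReal_apply_eq_integral 0 one_ne_zero,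
    ENNReal.toReal_ofReal (integral_nonneg fun t => gaussianPDFReal_nonneg 0 1 t)]
  linarith [intervalIntegral.integral_Iic_sub_Iic (f := gaussianPDFReal 0 1) (a := a) (b := b)
    hint.integrableOn hint.integrableOn]

lemma continuous_stdNormalCDF : Continuous stdNormalCDF := by
  have h : stdNormalCDF = fun x => stdNormalCDF 0 + ∫ t in (0 : ℝ)..x, gaussianPDFReal 0 1 t := by
    funext x
    rw [← stdNormalCDF_sub_stdNormalCDF]
    ring
  rw [h]
  exact continuous_const.add ((integrable_gaussianPDFReal 0 1).continuous_primitive 0)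

lemma strictMono_stdNormalCDF : StrictMono stdNormalCDF := fun a b hab => by
  rw [← sub_pos, stdNormalCDF_sub_stdNormalCDF]
  exact intervalIntegral.intervalIntegral_pos_of_pos_on
    (integrable_gaussianPDFReal 0 1).intervalIntegrable
    (fun x _ => gaussianPDFReal_pos 0 1 x one_ne_zero) hab

lemma stdNormalCDF_stdNormalQuantile {t : ℝ} (ht : t ∈ Ioo 0 1) :
    stdNormalCDF (stdNormalQuantile t) = t := by
  have hbot : Filter.Tendsto stdNormalCDF Filter.atBot (nhds 0) :=
    stdNormalCDF_eq_cdf ▸ tendsto_cdf_atBot _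
  have htop : Filter.Tendsto stdNormalCDF Filter.atTop (nhds 1) :=
    stdNormalCDF_eq_cdf ▸ tendsto_cdf_atTop _
  obtain ⟨a, ha⟩ := (hbot.eventually (gt_mem_nhds ht.1)).exists
  obtain ⟨b, hb⟩ := (htop.eventually (lt_mem_nhds ht.2)).exists
  have hab : a ≤ b := (strictMono_stdNormalCDF.lt_iff_lt.mp (ha.trans hb)).le
  obtain ⟨x, -, hx⟩ :=
    intermediate_value_Icc hab continuous_stdNormalCDF.continuousOn ⟨ha.le, hb.le⟩
  exact Function.invFun_eq ⟨x, hx⟩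

/-- Chernoff bound with the Gaussian moment generating function `exp (s ^ 2 / 2)` at `s = -y`. -/
lemma stdNormalCDF_neg_le_exp {y : ℝ} (hy : 0 ≤ y) : stdNormalCDF (-y) ≤ exp (-y ^ 2 / 2) := by
  have h := measure_le_le_exp_mul_mgf (μ := gaussianReal 0 1) (X := fun x => x) (-y)
    (neg_nonpos.mpr hy) (integrable_exp_mul_gaussianReal (-y))
  rw [mgf_fun_id_gaussianReal, ← exp_add] at h
  rw [stdNormalCDF_eq_cdf, cdf_eq_real]
  convert h using 2
  · rfl
  · push_cast
    ring

lemma neg_sqrt_le_stdNormalQuantile {t : ℝ} (ht : t ∈ Ioo 0 1) :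
    -√(-2 * log t) ≤ stdNormalQuantile t := by
  by_contra! hlt
  have hsq : √(-2 * log t) ^ 2 = -2 * log t :=
    sq_sqrt (by nlinarith [log_neg ht.1 ht.2])
  have := (strictMono_stdNormalCDF hlt).trans_le (stdNormalCDF_neg_le_exp (sqrt_nonneg _))
  rw [stdNormalCDF_stdNormalQuantile ht, hsq, show -(-2 * log t) / 2 = log t by ring,
    exp_log ht.1] at this
  exact this.false

/-- Young's inequality `C y ≤ ε y² / 2 + C² / (2ε)` with `y = √(2 log t⁻¹)`. -/
lemma exp_neg_mul_stdNormalQuantile_le {C ε t : ℝ} (hC : 0 ≤ C) (hε : 0 < ε) (ht : t ∈ Ioo 0 1) :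
    exp (-C * stdNormalQuantile t) ≤ exp (C ^ 2 / (2 * ε)) * t ^ (-ε) := by
  set y := √(-2 * log t)
  have hy : y ^ 2 = -2 * log t := sq_sqrt (by nlinarith [log_neg ht.1 ht.2])
  have hquantile : -C * stdNormalQuantile t ≤ C * y := by
    nlinarith [neg_sqrt_le_stdNormalQuantile ht]
  have hyoung : C * y ≤ ε * y ^ 2 / 2 + C ^ 2 / (2 * ε) := by
    have : ε * y ^ 2 / 2 + C ^ 2 / (2 * ε) - C * y = (ε * y - C) ^ 2 / (2 * ε) := by
      field_simp
      ring
    nlinarith [div_nonneg (sq_nonneg (ε * y - C)) (by positivity : (0 : ℝ) ≤ 2 * ε)]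
  calc exp (-C * stdNormalQuantile t)
      ≤ exp (ε * y ^ 2 / 2 + C ^ 2 / (2 * ε)) := exp_le_exp.mpr (hquantile.trans hyoung)
    _ = exp (C ^ 2 / (2 * ε)) * t ^ (-ε) := by
      rw [rpow_def_of_pos ht.1, ← exp_add, hy]
      ring_nf

lemma summable_rpow_mul_log_nat_add_one {r : ℝ} (hr : r < -1) :
    Summable fun n : ℕ => ((n : ℝ) + 1) ^ r * log ((n : ℝ) + 1) := by
  set δ := (-1 - r) / 2
  have hδ : 0 < δ := by simp only [δ]; linarith
  have hsum : Summable fun n : ℕ => ((n : ℝ) + 1) ^ (r + δ) := by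
    have := (summable_nat_add_iff 1).mpr
      ((summable_nat_rpow (p := r + δ)).mpr (by simp only [δ]; linarith))
    exact_mod_cast this
  refine Summable.of_nonneg_of_le (fun n => ?_) (fun n => ?_) (hsum.div_const δ)
  · exact mul_nonneg (by positivity) (log_nonneg (le_add_of_nonneg_left n.cast_nonneg))
  · have hx : (0 : ℝ) < n + 1 := by positivity
    calc ((n : ℝ) + 1) ^ r * log ((n : ℝ) + 1)
        ≤ ((n : ℝ) + 1) ^ r * (((n : ℝ) + 1) ^ δ / δ) :=
          mul_le_mul_of_nonneg_left (log_le_rpow_div hx.le hδ) (by positivity)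
      _ = ((n : ℝ) + 1) ^ (r + δ) / δ := by rw [rpow_add hx]; ring

lemma one_le_zetaReal {q : ℝ} (hq : 1 < q) : 1 ≤ zetaReal q := by
  have hsum : Summable fun i : ℕ => ((i : ℝ) + 1) ^ (-q) := by
    have := (summable_nat_add_iff 1).mpr (summable_nat_rpow.mpr (neg_lt_neg hq))
    exact_mod_cast this
  simpa [zetaReal] using hsum.le_tsum 0 (fun j _ => by positivity)

lemma rpow_neg_mul_exp_neg_mul_stdNormalQuantile_le {q C a ε x : ℝ} (hq : 0 ≤ q) (hC : 0 ≤ C)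
    (hε : 0 < ε) (ha : a ∈ Ioo 0 1) (hx : 1 ≤ x) :
    x ^ (-q) * exp (-C * stdNormalQuantile (a * x ^ (-q))) ≤
      exp (C ^ 2 / (2 * ε)) * a ^ (-ε) * x ^ (-(1 - ε) * q) := by
  have hx0 : 0 < x := one_pos.trans_le hx
  have ht : a * x ^ (-q) ∈ Ioo 0 1 :=
    ⟨mul_pos ha.1 (rpow_pos_of_pos hx0 _), mul_lt_one_of_nonneg_of_lt_one_left ha.1.le ha.2
      (rpow_le_one_of_one_le_of_nonpos hx (neg_nonpos.mpr hq))⟩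
  calc x ^ (-q) * exp (-C * stdNormalQuantile (a * x ^ (-q)))
      ≤ x ^ (-q) * (exp (C ^ 2 / (2 * ε)) * (a * x ^ (-q)) ^ (-ε)) :=
        mul_le_mul_of_nonneg_left (exp_neg_mul_stdNormalQuantile_le hC hε ht) (by positivity)
    _ = exp (C ^ 2 / (2 * ε)) * a ^ (-ε) * x ^ (-(1 - ε) * q) := by
      rw [mul_rpow ha.1.le (rpow_nonneg hx0.le _), ← rpow_mul hx0.le,
        show -(1 - ε) * q = -q + -q * -ε by ring, rpow_add hx0]
      ring

/-- For every `q > 1`, `C > 0` and `α ∈ (0,1)`, the series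
`∑_{i=1}^∞ i^{-q} · exp(−C·Φ⁻¹(α i^{-q}/ζ(q))) · log i` converges. -/
theorem summable_q_series_exp_quantile_log
    (q C α : ℝ) (hq : 1 < q) (hC : 0 < C) (hα : α ∈ Set.Ioo (0 : ℝ) 1) :
    Summable (fun i : ℕ =>
      ((i : ℝ) + 1) ^ (-q) *
        Real.exp (-C * stdNormalQuantile (α * ((i : ℝ) + 1) ^ (-q) / zetaReal q)) *
        Real.log ((i : ℝ) + 1)) := by
  set ε := (q - 1) / (2 * q)
  have hε : 0 < ε := div_pos (by linarith) (by linarith)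
  have hexponent : -(1 - ε) * q < -1 := by
    have : -(1 - ε) * q = -(q + 1) / 2 := by simp only [ε]; field_simp; ring
    linarith
  have ha : α / zetaReal q ∈ Ioo 0 1 := by
    have hz := one_le_zetaReal hq
    exact ⟨div_pos hα.1 (by linarith), (div_lt_one (by linarith)).mpr (by linarith [hα.2])⟩
  have hx (i : ℕ) : (1 : ℝ) ≤ i + 1 := le_add_of_nonneg_left i.cast_nonneg
  refine Summable.of_nonneg_of_le (fun i => mul_nonneg (by positivity) (log_nonneg (hx i)))
    (fun i => ?_) ((summable_rpow_mul_log_nat_add_one hexponent).mul_left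
      (exp (C ^ 2 / (2 * ε)) * (α / zetaReal q) ^ (-ε)))
  rw [mul_div_right_comm, ← mul_assoc]
  exact mul_le_mul_of_nonneg_right (rpow_neg_mul_exp_neg_mul_stdNormalQuantile_le (by linarith)
    hC.le hε ha (hx i)) (log_nonneg (hx i))
end
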